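/- arXiv:2408.01353 — 3 statements merged into one kernel-verified Lean document; each statement's English description precedes it below -/
import Mathlib

section
/- The number of full rooted n-ary trees with i internal vertices equals binomial(n*i, i) / ((n-1)*i + 1). -/
/-- A full rooted `n`-ary tree: every internal vertex has exactly `n` ordered
children; leaves have no children. -/
inductive FullNaryTree (n : ℕ) : Type
  | leaf : FullNaryTree n
  | node : (Fin n → FullNaryTree n) → FullNaryTree n

/-- The number of internal vertices of a full rooted `n`-ary tree. -/
def FullNaryTree.internals {n : ℕ} : FullNaryTree n → ℕ
  | .leaf => 0
  | .node f => 1 + ∑ k : Fin n, (f k).internals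

namespace FNT
variable {n : ℕ}
open FullNaryTree

def ct (w : List Bool) : ℕ := w.count true

def Good (n : ℕ) (w : List Bool) : Prop :=
  w.length = n * ct w + 1 ∧ ∀ k < w.length, k ≤ n * ct (w.take k)

def code : FullNaryTree n → List Bool
  | .leaf => [false]
  | .node f => true :: ((List.finRange n).map fun k => code (f k)).flatten

lemma ct_append (a b : List Bool) : ct (a ++ b) = ct a + ct b := List.count_append ..

lemma ct_flatten (l : List (List Bool)) : ct l.flatten = (l.map ct).sum := by
  induction l with
  | nil => rfl
  | cons a l ih => simp [ct_append, ih]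

lemma ct_code (t : FullNaryTree n) : ct (code t) = t.internals := by
  induction t with
  | leaf => rfl
  | node f ih =>
    have : ct (code (node f)) = 1 + (((List.finRange n).map fun k => code (f k)).map ct).sum := by
      rw [show ct (code (node f)) = 1 + ct (((List.finRange n).map fun k => code (f k)).flatten) by
        simp [code, ct, List.count_cons]; rw [add_comm]]
      rw [ct_flatten]
    rw [this, internals, List.map_map]
    congr 1
    rw [show ((fun w => ct w) ∘ fun k => code (f k)) = fun k => (f k).internals by
      funext k; exact ih k]
    rw [← List.ofFn_eq_map, List.sum_ofFn]

lemma len_code (t : FullNaryTree n) : (code t).length = n * t.internals + 1 := by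
  induction t with
  | leaf => simp [code, internals]
  | node f ih =>
    simp only [code, internals, List.length_cons, List.length_flatten, List.map_map]
    rw [show (List.length ∘ fun k => code (f k)) = fun k => n * (f k).internals + 1 by
      funext k; exact ih k]
    rw [← List.ofFn_eq_map, List.sum_ofFn]
    rw [Finset.sum_add_distrib, ← Finset.mul_sum]
    simp [Finset.sum_const, Finset.card_univ]; ring

lemma flatten_len (l : List (List Bool)) (h : ∀ u ∈ l, Good n u) :
    l.flatten.length = n * ct l.flatten + l.length := by
  induction l with
  | nil => rfl
  | cons u l ih =>
    have hu := (h u (by simp)).1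
    have hl := ih (fun v hv => h v (by simp [hv]))
    simp only [List.flatten_cons, List.length_append, List.length_cons, ct_append, hu, hl]
    ring

lemma flatten_prefix (l : List (List Bool)) (h : ∀ u ∈ l, Good n u) :
    ∀ k < l.flatten.length, k + 1 ≤ n * ct (l.flatten.take k) + l.length := by
  induction l with
  | nil => simp
  | cons u l ih =>
    intro k hk
    simp only [List.flatten_cons] at hk ⊢
    rcases lt_or_ge k u.length with h1 | h1
    · rw [List.take_append_of_le_length h1.le]
      have := (h u (by simp)).2 k h1
      simp only [List.length_cons]
      omega
    · rw [List.take_append, List.take_of_length_le h1, ct_append]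
      have hlen : k - u.length < l.flatten.length := by
        rw [List.length_append] at hk; omega
      have := ih (fun v hv => h v (by simp [hv])) _ hlen
      have hu := (h u (by simp)).1
      simp only [List.length_cons]
      rw [Nat.mul_add]
      omega

lemma good_code (hn : 1 ≤ n) (t : FullNaryTree n) : Good n (code t) := by
  induction t with
  | leaf =>
    constructor
    · simp [code, ct]
    · intro k hk
      simp only [code, List.length_cons, List.length_nil] at hk
      interval_cases k
      simp
  | node f ih =>
    set l := (List.finRange n).map fun k => code (f k) with hl
    have hall : ∀ u ∈ l, Good n u := by
      intro u hu
      simp only [hl, List.mem_map] at hu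
      obtain ⟨k, _, rfl⟩ := hu
      exact ih k
    have hlen : l.length = n := by simp [hl]
    have hfl := flatten_len l hall
    rw [show code (node f) = true :: l.flatten from rfl]
    constructor
    · show (true :: l.flatten).length = n * ct (true :: l.flatten) + 1
      have : ct (true :: l.flatten) = ct l.flatten + 1 := by
        simp [ct, List.count_cons]
      simp only [List.length_cons, this, hfl, hlen]
      ring
    · intro k hk
      match k with
      | 0 => omega
      | k' + 1 =>
        show k' + 1 ≤ n * ct ((true :: l.flatten).take (k' + 1))
        have hk' : k' < l.flatten.length := by
          simp only [List.length_cons] at hk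
          omega
        have := flatten_prefix l hall k' hk'
        have hct : ct ((true :: l.flatten).take (k' + 1)) = ct (l.flatten.take k') + 1 := by
          simp [ct, List.count_cons, List.take_cons]
        rw [hct, Nat.mul_add, Nat.mul_one]
        omega
lemma cancel_list (ts : List (FullNaryTree n))
    (hts : ∀ t ∈ ts, ∀ (t' : FullNaryTree n) (a b : List Bool),
      code t ++ a = code t' ++ b → t = t' ∧ a = b) :
    ∀ (us : List (FullNaryTree n)), ts.length = us.length →
    ∀ a b : List Bool, (ts.map code).flatten ++ a = (us.map code).flatten ++ b →
      ts = us ∧ a = b := by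
  induction ts with
  | nil =>
    intro us hus a b h
    rw [List.length_nil] at hus
    obtain rfl : us = [] := (List.length_eq_zero_iff.mp hus.symm)
    simpa using h
  | cons t ts ih =>
    intro us hus a b h
    match us with
    | [] => simp at hus
    | u :: us =>
      simp only [List.map_cons, List.flatten_cons, List.append_assoc] at h
      obtain ⟨rfl, h2⟩ := hts t (by simp) u _ _ h
      have := ih (fun t' ht' => hts t' (by simp [ht'])) us (by simpa using hus) _ _ h2
      exact ⟨by rw [this.1], this.2⟩

lemma code_cancel (t t' : FullNaryTree n) (a b : List Bool)
    (h : code t ++ a = code t' ++ b) : t = t' ∧ a = b := by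
  induction t generalizing t' a b with
  | leaf =>
    cases t' with
    | leaf => simpa [code] using h
    | node g => simp [code] at h
  | node f ih =>
    cases t' with
    | leaf => simp [code] at h
    | node g =>
      simp only [code, List.cons_append, List.cons.injEq, true_and] at h
      have hts : ((List.finRange n).map f).map code = (List.finRange n).map fun k => code (f k) := by
        rw [List.map_map]; rfl
      have hus : ((List.finRange n).map g).map code = (List.finRange n).map fun k => code (g k) := by
        rw [List.map_map]; rfl
      have := cancel_list ((List.finRange n).map f)
        (by
          intro t ht t'' a' b' hh
          simp only [List.mem_map] at ht
          obtain ⟨k, _, rfl⟩ := ht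
          exact ih k t'' a' b' hh)
        ((List.finRange n).map g) (by simp) a b (by rw [hts, hus]; exact h)
      refine ⟨?_, this.2⟩
      have hfg : ∀ k ∈ List.finRange n, f k = g k := List.map_inj_left.mp this.1
      have : f = g := funext fun k => hfg k (List.mem_finRange k)
      rw [this]

lemma code_injective : Function.Injective (code (n := n)) := by
  intro t t' h
  exact (code_cancel t t' [] [] (by simpa using h)).1

def Bal (n c : ℕ) (w : List Bool) : Prop :=
  w.length = n * ct w + c ∧ ∀ k < w.length, k + 1 ≤ n * ct (w.take k) + c

lemma ct_take_mono (w : List Bool) {a b : ℕ} (h : a ≤ b) : ct (w.take a) ≤ ct (w.take b) := by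
  have : w.take a = (w.take b).take a := by rw [List.take_take, min_eq_left h]
  rw [this]
  exact (List.take_sublist a (w.take b)).count_le true

lemma split (c : ℕ) (hc : 1 ≤ c) (w : List Bool) (hw : Bal n c w) :
    ∃ ws : List (List Bool), ws.length = c ∧ ws.flatten = w ∧ ∀ u ∈ ws, Good n u := by
  induction c generalizing w with
  | zero => omega
  | succ c ihc =>
    rcases Nat.eq_zero_or_pos c with rfl | hc'
    · refine ⟨[w], rfl, by simp, ?_⟩
      intro u hu
      simp only [List.mem_singleton] at hu
      subst hu
      exact ⟨by simpa using hw.1, fun k hk => by have := hw.2 k hk; omega⟩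
    · -- find minimal k with n * ct (w.take k) + 1 ≤ k
      have hP : n * ct (w.take w.length) + 1 ≤ w.length := by
        rw [List.take_length, hw.1]; omega
      have hex : ∃ k, n * ct (w.take k) + 1 ≤ k := ⟨w.length, hP⟩
      set k := Nat.find hex with hkdef
      have hPk : n * ct (w.take k) + 1 ≤ k := Nat.find_spec hex
      have hkmin : ∀ j < k, ¬ (n * ct (w.take j) + 1 ≤ j) := fun j hj => Nat.find_min hex hj
      have hkle : k ≤ w.length := Nat.find_min' hex hP
      have hk1 : 1 ≤ k := by
        rcases Nat.eq_zero_or_pos k with h0 | h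
        · exfalso
          rw [h0] at hPk
          simp at hPk
        · exact h
      have hprev : k ≤ n * ct (w.take (k-1)) + 1 := by
        have := hkmin (k-1) (by omega)
        omega
      have hmono : n * ct (w.take (k-1)) ≤ n * ct (w.take k) :=
        Nat.mul_le_mul_left n (ct_take_mono w (by omega))
      have hkeq : k = n * ct (w.take k) + 1 := by omega
      set u := w.take k with hu
      set v := w.drop k with hv
      have huv : u ++ v = w := List.take_append_drop k w
      have hctw : ct w = ct u + ct v := by rw [← huv, ct_append]
      have hlu : u.length = k := List.length_take_of_le hkle
      have hlv : v.length = w.length - k := List.length_drop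
      have hgoodu : Good n u := by
        constructor
        · rw [hlu, hkeq]
        · intro j hj
          rw [hlu] at hj
          have := hkmin j hj
          have : j ≤ n * ct (w.take j) := by omega
          rwa [hu, List.take_take, min_eq_left hj.le]
      have hbalv : Bal n c v := by
        constructor
        · have h1 := hw.1
          have h2 : n * ct w = n * ct u + n * ct v := by rw [hctw, Nat.mul_add]
          omega
        · intro j hj
          have hkj : k + j < w.length := by omega
          have := hw.2 (k + j) hkj
          rw [List.take_add, ← hu, ← hv, ct_append, Nat.mul_add] at this
          omega
      obtain ⟨ws, hws1, hws2, hws3⟩ := ihc hc' v hbalv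
      refine ⟨u :: ws, by simp [hws1], by simp [hws2, huv], ?_⟩
      intro x hx
      rcases List.mem_cons.mp hx with rfl | hx
      · exact hgoodu
      · exact hws3 x hx

lemma list_of_codes (ws : List (List Bool)) (h : ∀ u ∈ ws, ∃ t : FullNaryTree n, code t = u) :
    ∃ ts : List (FullNaryTree n), ts.map code = ws := by
  induction ws with
  | nil => exact ⟨[], rfl⟩
  | cons u ws ih =>
    obtain ⟨t, ht⟩ := h u (by simp)
    obtain ⟨ts, hts⟩ := ih (fun v hv => h v (by simp [hv]))
    exact ⟨t :: ts, by simp [ht, hts]⟩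

lemma good_is_code_aux (hn : 1 ≤ n) :
    ∀ (N : ℕ) (w : List Bool), w.length ≤ N → Good n w → ∃ t : FullNaryTree n, code t = w := by
  intro N
  induction N with
  | zero =>
    intro w hw hg
    exfalso
    have := hg.1
    omega
  | succ N ih =>
    intro w hw hg
    match w with
    | [] => exact absurd hg.1 (by simp)
    | false :: v =>
      have hv : v = [] := by
        by_contra hne
        have h2 : 1 < (false :: v).length := by
          simp only [List.length_cons]
          have := List.length_pos_iff.mpr hne
          omega
        have := hg.2 1 h2
        simp [ct] at this
      subst hv
      exact ⟨FullNaryTree.leaf, rfl⟩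
    | true :: v =>
      have hct : ct (true :: v) = ct v + 1 := by simp [ct, List.count_cons]
      have hlenv : v.length = n * ct v + n := by
        have h1 := hg.1
        rw [List.length_cons, hct, Nat.mul_add, Nat.mul_one] at h1
        omega
      have hbal : Bal n n v := by
        refine ⟨hlenv, ?_⟩
        intro j hj
        have := hg.2 (j+1) (by simp only [List.length_cons]; omega)
        rw [List.take_succ_cons] at this
        have hc2 : ct (true :: v.take j) = ct (v.take j) + 1 := by simp [ct, List.count_cons]
        rw [hc2, Nat.mul_add, Nat.mul_one] at this
        omega
      obtain ⟨ws, hws1, hws2, hws3⟩ := split n hn v hbal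
      have hts : ∀ u ∈ ws, ∃ t : FullNaryTree n, code t = u := by
        intro u hu
        apply ih
        · have h1 : u.length ≤ ws.flatten.length := (List.sublist_flatten_of_mem hu).length_le
          rw [hws2] at h1
          simp only [List.length_cons] at hw
          omega
        · exact hws3 u hu
      obtain ⟨ts, hts2⟩ := list_of_codes ws hts
      have hlts : ts.length = n := by
        rw [← hts2] at hws1
        simpa using hws1
      refine ⟨FullNaryTree.node (fun k => ts.get (Fin.cast hlts.symm k)), ?_⟩
      show true :: ((List.finRange n).map fun k => code (ts.get (Fin.cast hlts.symm k))).flatten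
          = true :: v
      congr 1
      have hmg : (List.finRange n).map (fun k => ts.get (Fin.cast hlts.symm k)) = ts := by
        apply List.ext_get
        · simp [hlts]
        · intro i h1 h2
          simp
      have : (List.finRange n).map (fun k => code (ts.get (Fin.cast hlts.symm k))) = ws := by
        rw [show (fun k : Fin n => code (ts.get (Fin.cast hlts.symm k)))
            = code ∘ (fun k : Fin n => ts.get (Fin.cast hlts.symm k)) from rfl,
          ← List.map_map, hmg, hts2]
      rw [this, hws2]

lemma good_is_code (hn : 1 ≤ n) (w : List Bool) (hg : Good n w) :
    ∃ t : FullNaryTree n, code t = w :=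
  good_is_code_aux hn w.length w le_rfl hg
lemma ct_rotate (w : List Bool) (j : ℕ) : ct (w.rotate j) = ct w :=
  (w.rotate_perm j).count_eq true

def cc (w : List Bool) (j : ℕ) : ℕ := ct ((w ++ w).take j)

def dd (n : ℕ) (w : List Bool) (j : ℕ) : ℤ := (j : ℤ) - n * cc w j

lemma cc_small (w : List Bool) {j : ℕ} (hj : j ≤ w.length) : cc w j = ct (w.take j) := by
  rw [cc, List.take_append_of_le_length hj]

lemma cc_add (w : List Bool) {j k : ℕ} (hj : j ≤ w.length) (hk : k ≤ w.length) :
    cc w (j + k) = cc w j + ct ((w.rotate j).take k) := by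
  rw [cc, cc, List.take_add, ct_append]
  congr 2
  have hdrop : (w ++ w).drop j = w.rotate j ++ w.drop j := by
    rw [List.rotate_eq_drop_append_take hj, List.drop_append_of_le_length hj,
      List.append_assoc, List.take_append_drop]
  rw [hdrop, List.take_append_of_le_length (by rw [List.length_rotate]; exact hk)]

lemma cc_per (w : List Bool) {j : ℕ} (hj : j ≤ w.length) :
    cc w (w.length + j) = ct w + ct (w.take j) := by
  rw [cc, List.take_add, List.take_left, List.drop_left, ct_append]

lemma dd_per (w : List Bool) (hw : w.length = n * ct w + 1) {j : ℕ} (hj : j ≤ w.length) :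
    dd n w (w.length + j) = dd n w j + 1 := by
  rw [dd, dd, cc_per w hj, cc_small w hj]
  push_cast
  rw [hw]
  push_cast
  ring

lemma exists_good_rotate (w : List Bool) (hw : w.length = n * ct w + 1) :
    ∃ j < w.length, Good n (w.rotate j) := by
  have hL : 0 < w.length := by omega
  have hne : (Finset.range w.length).Nonempty := ⟨0, by simpa using hL⟩
  set M := (Finset.range w.length).sup' hne (dd n w) with hM
  have hex : ∃ j, j < w.length ∧ dd n w j = M := by
    obtain ⟨b, hb, hbe⟩ := Finset.exists_mem_eq_sup' hne (dd n w)
    exact ⟨b, Finset.mem_range.mp hb, hbe.symm⟩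
  classical
  set j0 := Nat.find hex with hj0def
  obtain ⟨hj0lt, hj0M⟩ : j0 < w.length ∧ dd n w j0 = M := Nat.find_spec hex
  have hmin : ∀ j < j0, dd n w j < M := by
    intro j hj
    have h1 : ¬(j < w.length ∧ dd n w j = M) := Nat.find_min hex hj
    have h2 : dd n w j ≤ M := Finset.le_sup' (dd n w) (Finset.mem_range.mpr (by omega))
    rcases lt_or_eq_of_le h2 with h | h
    · exact h
    · exact absurd ⟨by omega, h⟩ h1
  refine ⟨j0, hj0lt, ?_, ?_⟩
  · rw [List.length_rotate, ct_rotate]; exact hw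
  · intro k hk
    rw [List.length_rotate] at hk
    have hcc := cc_add w hj0lt.le hk.le
    have key : dd n w (j0 + k) ≤ dd n w j0 := by
      rcases lt_or_ge (j0 + k) w.length with h | h
      · rw [hj0M]
        exact Finset.le_sup' (dd n w) (Finset.mem_range.mpr h)
      · have hj' : j0 + k - w.length < j0 := by omega
        have heq : j0 + k = w.length + (j0 + k - w.length) := by omega
        rw [heq, dd_per w hw (by omega)]
        have := hmin _ hj'
        omega
    rw [dd, dd, hcc] at key
    push_cast at key
    rw [mul_add] at key
    have : (k : ℤ) ≤ n * ct ((w.rotate j0).take k) := by linarith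
    exact_mod_cast this

lemma good_rotate_unique (x : List Bool) (hx : Good n x) (d : ℕ) (hd : 0 < d)
    (hdL : d < x.length) (hxd : Good n (x.rotate d)) : False := by
  have hrot : x.rotate d = x.drop d ++ x.take d := List.rotate_eq_drop_append_take hdL.le
  have h1 : d ≤ n * ct (x.take d) := hx.2 d hdL
  have h2 : (x.drop d).length ≤ n * ct (x.drop d) := by
    have hlen : (x.drop d).length < (x.rotate d).length := by
      rw [List.length_rotate, List.length_drop]; omega
    have := hxd.2 (x.drop d).length hlen
    rwa [hrot, List.take_left] at this
  have h3 := hx.1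
  have h5 : n * ct x = n * ct (x.take d) + n * ct (x.drop d) := by
    rw [← Nat.mul_add, ← ct_append, List.take_append_drop]
  have h6 : (x.drop d).length = x.length - d := List.length_drop
  omega

lemma rotate_good_inj_le (w : List Bool) {j1 j2 : ℕ} (hle : j1 ≤ j2) (h2 : j2 < w.length)
    (g1 : Good n (w.rotate j1)) (g2 : Good n (w.rotate j2)) : j1 = j2 := by
  by_contra hne
  have heq : (w.rotate j1).rotate (j2 - j1) = w.rotate j2 := by
    rw [List.rotate_rotate]
    congr 1
    omega
  exact good_rotate_unique _ g1 (j2 - j1) (by omega)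
    (by rw [List.length_rotate]; omega) (by rw [heq]; exact g2)

lemma rotate_good_inj (w : List Bool) {j1 j2 : ℕ} (h1 : j1 < w.length) (h2 : j2 < w.length)
    (g1 : Good n (w.rotate j1)) (g2 : Good n (w.rotate j2)) : j1 = j2 := by
  rcases le_total j1 j2 with h | h
  · exact rotate_good_inj_le w h h2 g1 g2
  · exact (rotate_good_inj_le w h h1 g2 g1).symm
lemma ct_ofFn {L : ℕ} (f : Fin L → Bool) :
    ct (List.ofFn f) = (Finset.univ.filter fun j => f j = true).card := by
  rw [Finset.card_filter]
  induction L with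
  | zero => simp [ct]
  | succ L ih =>
    rw [List.ofFn_succ, Fin.sum_univ_succ, ← ih]
    simp only [ct, List.count_cons]
    cases h : f 0 <;> simp [h, add_comm]

lemma card_A (L i : ℕ) :
    Nat.card {w : List Bool // w.length = L ∧ ct w = i} = L.choose i := by
  classical
  have := Nat.card_eq_of_bijective
    (f := fun s : {s : Finset (Fin L) // s.card = i} =>
      (⟨List.ofFn (fun j => decide (j ∈ s.val)),
        by simp, by
          rw [ct_ofFn]
          have : (Finset.univ.filter fun j => decide (j ∈ s.val) = true) = s.val := by
            ext j; simp
          rw [this, s.prop]⟩ :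
        {w : List Bool // w.length = L ∧ ct w = i}))
    ?_
  · rw [← this, Nat.card_eq_fintype_card, Fintype.card_finset_len, Fintype.card_fin]
  constructor
  · intro s t h
    simp only [Subtype.mk.injEq] at h
    have h2 := List.ofFn_injective h
    apply Subtype.ext
    ext j
    have := congrFun h2 j
    simpa using this
  · rintro ⟨w, hw1, hw2⟩
    refine ⟨⟨Finset.univ.filter fun j : Fin L => w.get (Fin.cast hw1.symm j) = true, ?_⟩, ?_⟩
    · rw [← ct_ofFn]
      have : List.ofFn (fun j : Fin L => w.get (Fin.cast hw1.symm j)) = w := by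
        apply List.ext_get (by simp [hw1])
        intro j h1 h2
        simp
      rw [this, hw2]
    · apply Subtype.ext
      have hfn : List.ofFn (fun j : Fin L => w.get (Fin.cast hw1.symm j)) = w := by
        apply List.ext_get (by simp [hw1])
        intro j h1 h2
        simp
      calc (List.ofFn fun j : Fin L =>
              decide (j ∈ Finset.univ.filter fun j : Fin L => w.get (Fin.cast hw1.symm j) = true))
          = List.ofFn (fun j : Fin L => w.get (Fin.cast hw1.symm j)) := by
            congr 1
            funext j
            simp
        _ = w := hfn

lemma card_rotations (i : ℕ) (hn : 1 ≤ n) :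
    Nat.card {w : List Bool // w.length = n * i + 1 ∧ ct w = i}
      = Nat.card {w : List Bool // Good n w ∧ ct w = i} * (n * i + 1) := by
  classical
  set L := n * i + 1 with hL
  have hbij : Function.Bijective
      (fun p : {w : List Bool // Good n w ∧ ct w = i} × Fin L =>
        (⟨p.1.val.rotate p.2.val, by
          rw [List.length_rotate, p.1.prop.1.1, p.1.prop.2], by
          rw [ct_rotate, p.1.prop.2]⟩ :
          {w : List Bool // w.length = L ∧ ct w = i})) := by
    constructor
    · rintro ⟨g1, j1⟩ ⟨g2, j2⟩ h
      simp only [Subtype.mk.injEq] at h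
      have hL1 : g1.val.length = L := by rw [g1.prop.1.1, g1.prop.2]
      have hL2 : g2.val.length = L := by rw [g2.prop.1.1, g2.prop.2]
      have hLpos : 0 < L := by omega
      have hj1 : j1.val < L := j1.isLt
      have hj2 : j2.val < L := j2.isLt
      have t1 : g1.val.rotate (j1.val + (L - j1.val)) = g1.val := by
        rw [show j1.val + (L - j1.val) = g1.val.length by omega, List.rotate_length]
      have t2 : g1.val.rotate (j1.val + (L - j1.val)) = g2.val.rotate (j2.val + (L - j1.val)) := by
        rw [← List.rotate_rotate, ← List.rotate_rotate, h]
      have e1 : g1.val = g2.val.rotate ((j2.val + (L - j1.val)) % g2.val.length) := by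
        rw [List.rotate_mod, ← t2, t1]
      have hr0 : (j2.val + (L - j1.val)) % g2.val.length = 0 := by
        have hrg : Good n (g2.val.rotate ((j2.val + (L - j1.val)) % g2.val.length)) := by
          rw [← e1]; exact g1.prop.1
        have h0g : Good n (g2.val.rotate 0) := by rw [List.rotate_zero]; exact g2.prop.1
        exact rotate_good_inj g2.val (Nat.mod_lt _ (by omega)) (by omega) hrg h0g
      have hg12 : g1 = g2 := Subtype.ext (by rw [e1, hr0, List.rotate_zero])
      subst hg12
      -- now j1 = j2
      have t1' : (g1.val.rotate j2.val).rotate (L - j2.val) = g1.val := by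
        rw [List.rotate_rotate, show j2.val + (L - j2.val) = g1.val.length by omega,
          List.rotate_length]
      have t2' : g1.val.rotate ((j1.val + (L - j2.val)) % g1.val.length) = g1.val := by
        rw [List.rotate_mod, ← List.rotate_rotate, h, t1']
      have hm0 : (j1.val + (L - j2.val)) % g1.val.length = 0 := by
        have hrg : Good n (g1.val.rotate ((j1.val + (L - j2.val)) % g1.val.length)) := by
          rw [t2']; exact g1.prop.1
        have h0g : Good n (g1.val.rotate 0) := by rw [List.rotate_zero]; exact g1.prop.1
        exact rotate_good_inj g1.val (Nat.mod_lt _ (by omega)) (by omega) hrg h0g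
      rw [hL1] at hm0
      have hdvd : L ∣ j1.val + (L - j2.val) := Nat.dvd_of_mod_eq_zero hm0
      obtain ⟨q, hq⟩ := hdvd
      have hq1 : q = 1 := by
        rcases Nat.lt_or_ge q 2 with hlt | hge
        · interval_cases q
          · omega
          · rfl
        · exfalso
          have : 2 * L ≤ L * q := by
            calc 2 * L = L * 2 := by ring
            _ ≤ L * q := Nat.mul_le_mul_left L hge
          omega
      rw [hq1, Nat.mul_one] at hq
      have : j1.val = j2.val := by omega
      exact Prod.ext rfl (Fin.ext this)
    · rintro ⟨w, hw1, hw2⟩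
      have hwlen : w.length = n * ct w + 1 := by rw [hw2, ← hL, hw1]
      obtain ⟨j0, hj0, hgood⟩ := exists_good_rotate w hwlen
      refine ⟨⟨⟨w.rotate j0, hgood, by rw [ct_rotate, hw2]⟩,
        ⟨(w.length - j0) % L, by apply Nat.mod_lt; omega⟩⟩, ?_⟩
      apply Subtype.ext
      show (w.rotate j0).rotate ((w.length - j0) % L) = w
      rw [show L = (w.rotate j0).length from by rw [List.length_rotate, hw1]]
      rw [List.rotate_mod, List.rotate_rotate, show j0 + (w.length - j0) = w.length from by omega,
        List.rotate_length]
  rw [← Nat.card_eq_of_bijective _ hbij, Nat.card_prod,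
    Nat.card_eq_fintype_card (α := Fin L), Fintype.card_fin]

lemma card_trees_eq_card_good (i : ℕ) (hn : 1 ≤ n) :
    Nat.card {t : FullNaryTree n // t.internals = i}
      = Nat.card {w : List Bool // Good n w ∧ ct w = i} := by
  apply Nat.card_eq_of_bijective
    (f := fun t => ⟨code t.val, good_code hn t.val, by rw [ct_code, t.prop]⟩)
  constructor
  · intro t1 t2 h
    simp only [Subtype.mk.injEq] at h
    exact Subtype.ext (code_injective h)
  · rintro ⟨w, hg, hct⟩
    obtain ⟨t, ht⟩ := good_is_code hn w hg
    refine ⟨⟨t, by rw [← ct_code, ht, hct]⟩, Subtype.ext ht⟩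

end FNT

/-- The number of full rooted `n`-ary trees with `i` internal vertices
equals `(n*i).choose i / ((n-1)*i + 1)`. -/
theorem card_fullNaryTree (n i : ℕ) (hn : 1 ≤ n) :
    Nat.card {t : FullNaryTree n // t.internals = i} =
      (n * i).choose i / ((n - 1) * i + 1) := by
  have key : Nat.card {t : FullNaryTree n // t.internals = i} * (n * i + 1)
      = (n * i + 1).choose i := by
    rw [FNT.card_trees_eq_card_good i hn, ← FNT.card_rotations i hn, FNT.card_A]
  have hsub : (n - 1) * i = n * i - i := by
    rw [Nat.sub_mul, Nat.one_mul]
  have hile : i ≤ n * i := Nat.le_mul_of_pos_left i hn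
  have id1 : (n * i + 1) * (n * i).choose i = ((n - 1) * i + 1) * ((n * i + 1).choose i) := by
    have h1 := Nat.add_one_mul_choose_eq (n * i) ((n - 1) * i)
    have h2 : (n * i).choose ((n - 1) * i) = (n * i).choose i := by
      rw [hsub]
      exact Nat.choose_symm hile
    have h3 : (n * i + 1).choose ((n - 1) * i + 1) = (n * i + 1).choose i := by
      have := Nat.choose_symm (show i ≤ n * i + 1 by omega) (n := n * i + 1)
      rwa [show n * i + 1 - i = (n - 1) * i + 1 by omega] at this
    rw [h2, h3] at h1
    rw [h1]
    ring
  have id2 : (n * i).choose i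
      = Nat.card {t : FullNaryTree n // t.internals = i} * ((n - 1) * i + 1) := by
    have hpos : 0 < n * i + 1 := by omega
    apply Nat.eq_of_mul_eq_mul_left hpos
    rw [id1, ← key]
    ring
  exact (Nat.div_eq_of_eq_mul_right (by omega) (id2.trans (mul_comm _ _))).symm
end

section
/- For all integers i ≥ 0 and n ≥ 1, the Fuss–Catalan number f(i,n) = binomial(n*i, i)/((n-1)*i+1) is a positive integer, i.e., ((n-1)*i+1) divides binomial(n*i, i). -/
lemma key_choose (m k : ℕ) (h : k ≤ m) :
    (m + 1 - k) * (m + 1).choose k = (m + 1) * m.choose k := by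
  have h1 := Nat.add_one_mul_choose_eq m (m - k)
  rw [Nat.choose_symm h] at h1
  have h2 : m - k + 1 = m + 1 - k := by omega
  rw [h2] at h1
  have h3 : (m + 1).choose (m + 1 - k) = (m + 1).choose k :=
    Nat.choose_symm (by omega)
  rw [h3] at h1
  rw [mul_comm]
  exact h1.symm

/-- For all integers `i ≥ 0` and `n ≥ 1`, the Fuss–Catalan number
`f(i,n) = (n*i).choose i / ((n-1)*i + 1)` is a positive integer; i.e.
`(n-1)*i + 1` divides `(n*i).choose i`. -/
theorem fussCatalan_is_integer (i n : ℕ) (hn : 1 ≤ n) :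
    ((n - 1) * i + 1) ∣ (n * i).choose i := by
  have hle : i ≤ n * i := Nat.le_mul_of_pos_left i hn
  have hsub : (n - 1) * i = n * i - i := Nat.sub_one_mul n i
  have heq : n * i + 1 - i = (n - 1) * i + 1 := by omega
  have hkey := key_choose (n * i) i hle
  rw [heq] at hkey
  have hdvd : ((n - 1) * i + 1) ∣ (n * i + 1) * (n * i).choose i :=
    ⟨(n * i + 1).choose i, hkey.symm⟩
  have hcop : Nat.Coprime ((n - 1) * i + 1) (n * i + 1) := by
    have h1 : n * i + 1 = (n - 1) * i + 1 + i := by omega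
    rw [h1]
    simp [Nat.coprime_add_self_left, Nat.coprime_add_mul_right_left,
      Nat.Coprime]
  exact hcop.dvd_of_dvd_mul_left hdvd
end

section
/- Suppose a set of gaps {G_i} with degrees {d_i} is obtained by inserting a sibling portrait into a round gap of degree d_j. Then the degrees satisfy Σ_i (d_i − 1) = d_j − 1. In particular, for a finite lamination in the full disk (degree d) consisting of disjoint polygons each belonging to a sibling portrait, the sum of (degree − 1) over all gaps equals d − 1. -/
/-!
Cutting the disk along the polygons of a non-crossing partition of `m` marked points into `b`
blocks leaves `m - b + 1` round gaps. Indeed, when every block is a single point there is one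
round gap, and detaching a vertex `p` from a block with at least two vertices adds one block and
merges exactly two round gaps, namely those of the unit arcs on either side of `p`: any other
separation would make two blocks interleave. A sibling portrait uses all `D * n` points, and a
polygon with `c` vertices has degree `c / n`, so the polygon degrees sum to `D`; with
`D * n - #PP + 1` round gaps, the identity is arithmetic.
-/

/-- Cyclic displacement (number of steps counterclockwise) from `a` to `x` among
`m` marked points on the circle. -/
def arcPos {m : ℕ} (a x : Fin m) : ℕ := (x.val + m - a.val) % m

/-- `t` lies strictly between `p` and `q` in counterclockwise cyclic order. -/
def CycBtw {m : ℕ} (p t q : Fin m) : Prop := 0 < arcPos p t ∧ arcPos p t < arcPos p q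

/-- `q` is the next vertex of `S` counterclockwise after `p`. -/
def IsNext {m : ℕ} (S : Finset (Fin m)) (p q : Fin m) : Prop :=
  p ∈ S ∧ q ∈ S ∧ p ≠ q ∧ ∀ r ∈ S, ¬ CycBtw p r q

/-- The label of a marked point: the points are cyclically labeled by repetitions
of the word `x_0 x_1 … x_{n-1}`. -/
def label (n : ℕ) {m : ℕ} (p : Fin m) : ZMod n := (p.val : ZMod n)

/-- `S` is a polygon visiting the labels in positive (counterclockwise) cyclic
order, i.e. its boundary maps forward as a positively oriented covering of the
boundary of the `n`-gon. -/
def IsPosPolygon (n : ℕ) {m : ℕ} (S : Finset (Fin m)) : Prop :=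
  2 ≤ S.card ∧ n ∣ S.card ∧ ∀ p q, IsNext S p q → label n q = label n p + 1

/-- Two vertex sets cross (link) on the circle. -/
def Crosses {m : ℕ} (S T : Finset (Fin m)) : Prop :=
  ∃ p ∈ S, ∃ q ∈ S, ∃ r ∈ T, ∃ s ∈ T, CycBtw p r q ∧ CycBtw q s p

/-- A sibling portrait of the `n`-gon in a round gap of degree `D`: a collection of
pairwise disjoint, non-crossing, positively oriented polygons using all `D*n`
preimage points (so that together `D` sides map to each side of the `n`-gon). -/
def IsPortrait (D n : ℕ) (PP : Finset (Finset (Fin (D * n)))) : Prop :=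
  (∀ S ∈ PP, IsPosPolygon n S) ∧
  (∀ S ∈ PP, ∀ T ∈ PP, S ≠ T → Disjoint S T ∧ ¬ Crosses S T) ∧
  (∀ p : Fin (D * n), ∃ S ∈ PP, p ∈ S)

/-- Unit arcs `k` (between the marked points `k` and `k+1`) and `l` lie in the same
complementary region (round gap) determined by the polygons of `PP`: no polygon of
`PP` has vertices strictly on both sides of the pair of arcs. -/
def SameRegion {m : ℕ} [NeZero m] (PP : Finset (Finset (Fin m))) (k l : Fin m) : Prop :=
  k = l ∨ ∀ S ∈ PP, ¬ ((∃ p ∈ S, arcPos (k + 1) p ≤ arcPos (k + 1) l) ∧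
                        (∃ q ∈ S, arcPos (l + 1) q ≤ arcPos (l + 1) k))

/-- The number of round gaps: equivalence classes of unit arcs under `SameRegion`. -/
noncomputable def numRoundGaps {m : ℕ} [NeZero m] (PP : Finset (Finset (Fin m))) : ℕ :=
  Nat.card {C : Set (Fin m) // ∃ k : Fin m, C = {l | SameRegion PP k l}}

theorem Setoid.card_quotient_eq_add_one_of_merge {α : Type*} [Finite α] {r s : Setoid α}
    {a b : α} (hab : ¬ r a b)
    (hs : ∀ x y, s x y ↔ r x y ∨ (r x a ∧ r b y) ∨ (r x b ∧ r a y)) :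
    Nat.card (Quotient r) = Nat.card (Quotient s) + 1 := by
  classical
  let f : {u : Quotient r // u ≠ ⟦b⟧} → Quotient s := fun u =>
    Quotient.lift (fun x => (⟦x⟧ : Quotient s))
      (fun x y h => Quotient.sound ((hs x y).2 (.inl h))) u.1
  have hf : Function.Bijective f := by
    constructor
    · rintro ⟨u, hu⟩ ⟨v, hv⟩ huv
      induction u using Quotient.ind with | _ x
      induction v using Quotient.ind with | _ y
      have hxb : ¬ r x b := fun h => hu (Quotient.sound h)
      have hyb : ¬ r y b := fun h => hv (Quotient.sound h)
      have hxy : r x y := by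
        rcases (hs x y).1 (Quotient.exact huv) with h | ⟨_, h⟩ | ⟨h, _⟩
        · exact h
        · exact absurd (r.symm' h) hyb
        · exact absurd h hxb
      exact Subtype.ext (Quotient.sound hxy)
    · intro w
      induction w using Quotient.ind with | _ x
      by_cases hxb : r x b
      · refine ⟨⟨⟦a⟧, fun h => hab (Quotient.exact h)⟩, Quotient.sound ?_⟩
        exact (hs a x).2 (.inr (.inl ⟨r.refl' a, r.symm' hxb⟩))
      · exact ⟨⟨⟦x⟧, fun h => hxb (Quotient.exact h)⟩, rfl⟩
  rw [← Nat.card_congr (Equiv.optionSubtypeNe (⟦b⟧ : Quotient r)), Finite.card_option,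
    Nat.card_congr (Equiv.ofBijective f hf)]

section ArcArithmetic

variable {m : ℕ}

theorem arcPos_cases (a x : Fin m) :
    (a.val ≤ x.val ∧ arcPos a x = x.val - a.val) ∨
    (x.val < a.val ∧ arcPos a x = x.val + m - a.val) := by
  unfold arcPos
  rcases le_or_gt a.val x.val with h | h
  · rw [show x.val + m - a.val = x.val - a.val + m by omega, Nat.add_mod_right,
      Nat.mod_eq_of_lt (by omega)]
    exact .inl ⟨h, rfl⟩
  · exact .inr ⟨h, Nat.mod_eq_of_lt (by omega)⟩

theorem arcPos_lt (a x : Fin m) : arcPos a x < m := by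
  have := arcPos_cases a x; omega

theorem arcPos_self (a : Fin m) : arcPos a a = 0 := by
  have := arcPos_cases a a; omega

theorem arcPos_injective (a : Fin m) : Function.Injective (arcPos a) := by
  intro x y h
  have := arcPos_cases a x; have := arcPos_cases a y
  exact Fin.ext (by omega)

theorem arcPos_eq_zero_iff {a x : Fin m} : arcPos a x = 0 ↔ x = a := by
  rw [← arcPos_self a, (arcPos_injective a).eq_iff]

theorem arcPos_eq_sub_of_le {a b x : Fin m} (h : arcPos a b ≤ arcPos a x) :
    arcPos b x = arcPos a x - arcPos a b := by
  have := arcPos_cases a b; have := arcPos_cases a x; have := arcPos_cases b x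
  omega

theorem arcPos_eq_add_sub_of_lt {a b x : Fin m} (h : arcPos a x < arcPos a b) :
    arcPos b x = arcPos a x + m - arcPos a b := by
  have := arcPos_cases a b; have := arcPos_cases a x; have := arcPos_cases b x
  omega

theorem crosses_of_arcPos_lt {S T : Finset (Fin m)} {o a b c d : Fin m}
    (ha : a ∈ S) (hb : b ∈ T) (hc : c ∈ S) (hd : d ∈ T) (hab : arcPos o a < arcPos o b)
    (hbc : arcPos o b < arcPos o c) (hcd : arcPos o c < arcPos o d) : Crosses S T := by
  have := arcPos_lt o d
  have := arcPos_eq_sub_of_le (x := b) hab.le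
  have := arcPos_eq_sub_of_le (x := c) (hab.trans hbc).le
  have := arcPos_eq_sub_of_le (x := d) hcd.le
  have := arcPos_eq_add_sub_of_lt (x := a) (hab.trans hbc)
  exact ⟨a, ha, c, hc, b, hb, d, hd, by unfold CycBtw; omega, by unfold CycBtw; omega⟩

theorem not_crosses_singleton_left (p : Fin m) (T : Finset (Fin m)) : ¬ Crosses {p} T := by
  rintro ⟨a, ha, b, hb, r, -, s, -, h, -⟩
  rw [Finset.mem_singleton] at ha hb
  rw [ha, hb] at h
  unfold CycBtw at h
  rw [arcPos_self] at h
  omega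

theorem not_crosses_singleton_right (T : Finset (Fin m)) (p : Fin m) : ¬ Crosses T {p} := by
  rintro ⟨a, -, b, -, r, hr, s, hs, h1, h2⟩
  rw [Finset.mem_singleton] at hr hs
  rw [hr] at h1
  rw [hs] at h2
  have := arcPos_cases a p; have := arcPos_cases a b
  have := arcPos_cases b p; have := arcPos_cases b a
  unfold CycBtw at h1 h2
  omega

theorem crosses_mono {S S' T T' : Finset (Fin m)} (hS : S ⊆ S') (hT : T ⊆ T')
    (h : Crosses S T) : Crosses S' T' :=
  let ⟨a, ha, b, hb, r, hr, s, hs, h₁, h₂⟩ := h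
  ⟨a, hS ha, b, hS hb, r, hT hr, s, hT hs, h₁, h₂⟩

variable [NeZero m]

theorem val_add_one_cases (a : Fin m) :
    ((a + 1 : Fin m).val = a.val + 1 ∧ a.val + 1 < m) ∨
    ((a + 1 : Fin m).val = 0 ∧ a.val + 1 = m) := by
  have hm := NeZero.pos m
  rw [Fin.val_add, Fin.val_one']
  rcases Nat.lt_or_ge (a.val + 1) m with h | h
  · left
    rcases Nat.lt_or_ge 1 m with h1 | h1
    · rw [Nat.mod_eq_of_lt h1]; exact ⟨Nat.mod_eq_of_lt h, h⟩
    · omega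
  · right
    have e : a.val + 1 = m := by omega
    refine ⟨?_, e⟩
    rcases Nat.lt_or_ge 1 m with h1 | h1
    · rw [Nat.mod_eq_of_lt h1, e, Nat.mod_self]
    · have : m = 1 := by omega
      subst this; simp

theorem val_sub_one_cases (a : Fin m) :
    ((a - 1 : Fin m).val = a.val - 1 ∧ 1 ≤ a.val) ∨
    ((a - 1 : Fin m).val = m - 1 ∧ a.val = 0) := by
  have := val_add_one_cases (a - 1)
  rw [sub_add_cancel] at this
  omega

theorem arcPos_add_one_self (k : Fin m) : arcPos (k + 1) k = m - 1 := by
  have := arcPos_cases (k + 1) k; have := val_add_one_cases k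
  omega

theorem arcPos_sub_one {a p : Fin m} (h : p ≠ a) : arcPos a (p - 1) = arcPos a p - 1 := by
  have hp : p.val ≠ a.val := fun e => h (Fin.ext e)
  have := arcPos_cases a (p - 1); have := arcPos_cases a p; have := val_sub_one_cases p
  omega

end ArcArithmetic

section Arcs

variable {m : ℕ} [NeZero m]

/-- `x` is one of the marked points `k + 1, …, l`, i.e. lies on the arc from the unit arc `k`
to the unit arc `l`. -/
def InArc (k l x : Fin m) : Prop := arcPos (k + 1) x ≤ arcPos (k + 1) l

theorem inArc_swap_iff {k l : Fin m} (h : k ≠ l) (x : Fin m) :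
    InArc l k x ↔ ¬ InArc k l x := by
  have hkl : k.val ≠ l.val := fun e => h (Fin.ext e)
  have := arcPos_cases (k + 1) x; have := arcPos_cases (k + 1) l
  have := arcPos_cases (l + 1) x; have := arcPos_cases (l + 1) k
  have := val_add_one_cases k; have := val_add_one_cases l
  unfold InArc
  omega

theorem inArc_iff_of_lt {k l j : Fin m} (h : arcPos (k + 1) l < arcPos (k + 1) j) (x : Fin m) :
    InArc l j x ↔
      arcPos (k + 1) l < arcPos (k + 1) x ∧ arcPos (k + 1) x ≤ arcPos (k + 1) j := by
  have := arcPos_cases (l + 1) x; have := arcPos_cases (l + 1) j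
  have := arcPos_cases (k + 1) x; have := arcPos_cases (k + 1) l; have := arcPos_cases (k + 1) j
  have := val_add_one_cases k; have := val_add_one_cases l
  unfold InArc
  omega

theorem inArc_sub_one_self_iff {p x : Fin m} : InArc (p - 1) p x ↔ x = p := by
  rw [InArc, sub_add_cancel, arcPos_self, Nat.le_zero, arcPos_eq_zero_iff]

def ArcSep (S : Finset (Fin m)) (k l : Fin m) : Prop :=
  (∃ p ∈ S, InArc k l p) ∧ (∃ q ∈ S, InArc l k q)

theorem ArcSep.symm {S : Finset (Fin m)} {k l : Fin m} (h : ArcSep S k l) : ArcSep S l k :=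
  ⟨h.2, h.1⟩

theorem ArcSep.mono {S S' : Finset (Fin m)} {k l : Fin m} (hsub : S ⊆ S') (h : ArcSep S k l) :
    ArcSep S' k l :=
  ⟨h.1.imp fun _ ⟨hp, h⟩ => ⟨hsub hp, h⟩, h.2.imp fun _ ⟨hq, h⟩ => ⟨hsub hq, h⟩⟩

theorem arcSep_iff_of_ne {S : Finset (Fin m)} {k l : Fin m} (h : k ≠ l) :
    ArcSep S k l ↔ (∃ p ∈ S, InArc k l p) ∧ ∃ q ∈ S, ¬ InArc k l q := by
  simp only [ArcSep, inArc_swap_iff h]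

theorem arcSep_of_inArc {S : Finset (Fin m)} {k l x y : Fin m} (h : k ≠ l) (hx : x ∈ S)
    (hy : y ∈ S) (hxkl : InArc k l x) (hykl : ¬ InArc k l y) : ArcSep S k l :=
  (arcSep_iff_of_ne h).2 ⟨⟨x, hx, hxkl⟩, ⟨y, hy, hykl⟩⟩

theorem not_arcSep_singleton {k l : Fin m} (h : k ≠ l) (c : Fin m) : ¬ ArcSep {c} k l := by
  simp [arcSep_iff_of_ne h]

theorem inArc_of_not_arcSep {T : Finset (Fin m)} {k l : Fin m} (h : k ≠ l) (hT : ¬ ArcSep T k l)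
    {t t' : Fin m} (ht : t ∈ T) (ht' : t' ∈ T) (hkl : InArc k l t) : InArc k l t' := by
  by_contra h'
  exact hT (arcSep_of_inArc h ht ht' hkl h')

variable {PP : Finset (Finset (Fin m))}

theorem sameRegion_symm {k l : Fin m} (h : SameRegion PP k l) : SameRegion PP l k :=
  h.imp Eq.symm fun h S hS hsep => h S hS hsep.symm

theorem sameRegion_trans {k l j : Fin m} (h₁ : SameRegion PP k l) (h₂ : SameRegion PP l j) :
    SameRegion PP k j := by
  by_cases hkl : k = l
  · exact hkl ▸ h₂
  by_cases hlj : l = j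
  · exact hlj ▸ h₁
  by_cases hkj : k = j
  · exact .inl hkj
  replace h₁ := h₁.resolve_left hkl
  replace h₂ := h₂.resolve_left hlj
  refine .inr fun S hS hsep => ?_
  obtain ⟨⟨s₁, hs₁S, hs₁⟩, ⟨s₂, hs₂S, hs₂⟩⟩ := (arcSep_iff_of_ne hkj).1 hsep
  have hlj' : arcPos (k + 1) l ≠ arcPos (k + 1) j := fun e => hlj (arcPos_injective _ e)
  unfold InArc at hs₁ hs₂
  rcases Nat.lt_or_gt_of_ne hlj' with hlt | hlt
  · by_cases hs₁l : InArc k l s₁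
    · exact h₁ S hS (arcSep_of_inArc hkl hs₁S hs₂S hs₁l (by unfold InArc; omega))
    · refine h₂ S hS (arcSep_of_inArc hlj hs₁S hs₂S ?_ ?_)
      · exact (inArc_iff_of_lt hlt s₁).2 ⟨by unfold InArc at hs₁l; omega, hs₁⟩
      · rw [inArc_iff_of_lt hlt]; omega
  · by_cases hs₂l : InArc j l s₂
    · refine h₂ S hS (arcSep_of_inArc (Ne.symm hlj) hs₂S hs₁S hs₂l ?_).symm
      rw [inArc_iff_of_lt hlt]; omega
    · refine h₁ S hS (arcSep_of_inArc hkl hs₁S hs₂S (by unfold InArc; omega) ?_)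
      rw [inArc_iff_of_lt hlt] at hs₂l
      unfold InArc; omega

variable (PP) in
def regionSetoid : Setoid (Fin m) where
  r := SameRegion PP
  iseqv := ⟨fun _ => .inl rfl, sameRegion_symm, sameRegion_trans⟩

theorem numRoundGaps_eq_card_quotient :
    numRoundGaps PP = Nat.card (Quotient (regionSetoid PP)) := by
  refine Nat.card_congr ((Equiv.subtypeEquivRight fun C => ?_).trans
    (Setoid.quotientEquivClasses _).symm)
  have hclass (k : Fin m) : {l | SameRegion PP k l} = {l | SameRegion PP l k} :=
    Set.ext fun _ => ⟨sameRegion_symm, sameRegion_symm⟩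
  simp only [Setoid.classes, hclass]
  rfl

end Arcs

section NoncrossingPartition

variable {m : ℕ}

structure IsNoncrossingPartition (PP : Finset (Finset (Fin m))) : Prop where
  nonempty : ∀ S ∈ PP, S.Nonempty
  disjoint_not_crosses : ∀ S ∈ PP, ∀ T ∈ PP, S ≠ T → Disjoint S T ∧ ¬ Crosses S T
  exists_mem : ∀ x, ∃ S ∈ PP, x ∈ S

namespace IsNoncrossingPartition

variable {PP : Finset (Finset (Fin m))}

theorem eq_of_mem (h : IsNoncrossingPartition PP) {S T : Finset (Fin m)} (hS : S ∈ PP)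
    (hT : T ∈ PP) {x : Fin m} (hxS : x ∈ S) (hxT : x ∈ T) : S = T := by
  by_contra hST
  exact Finset.disjoint_left.1 (h.disjoint_not_crosses S hS T hT hST).1 hxS hxT

theorem sum_card (h : IsNoncrossingPartition PP) : ∑ S ∈ PP, S.card = m := by
  classical
  have hcover : PP.biUnion id = Finset.univ :=
    Finset.eq_univ_iff_forall.2 fun x => Finset.mem_biUnion.2 (h.exists_mem x)
  calc ∑ S ∈ PP, S.card = (PP.biUnion id).card :=
        (Finset.card_biUnion fun S hS T hT hST => (h.disjoint_not_crosses S hS T hT hST).1).symm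
    _ = m := by rw [hcover, Finset.card_univ, Fintype.card_fin]

theorem card_le_sum_card (h : IsNoncrossingPartition PP) : PP.card ≤ ∑ S ∈ PP, S.card := by
  simpa using Finset.card_nsmul_le_sum PP Finset.card 1 fun S hS => (h.nonempty S hS).card_pos

end IsNoncrossingPartition

def splitOff (PP : Finset (Finset (Fin m))) (S : Finset (Fin m)) (p : Fin m) :
    Finset (Finset (Fin m)) :=
  insert {p} (insert (S.erase p) (PP.erase S))

variable {PP : Finset (Finset (Fin m))} {S : Finset (Fin m)} {p : Fin m}

theorem mem_splitOff {T : Finset (Fin m)} :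
    T ∈ splitOff PP S p ↔ T = {p} ∨ T = S.erase p ∨ (T ∈ PP ∧ T ≠ S) := by
  simp only [splitOff, Finset.mem_insert, Finset.mem_erase]
  tauto

theorem card_splitOff (h : IsNoncrossingPartition PP) (hS : S ∈ PP) (hp : p ∈ S)
    (hS₂ : 2 ≤ S.card) : (splitOff PP S p).card = PP.card + 1 := by
  have hrest : (S.erase p).Nonempty := by
    rw [← Finset.card_pos, Finset.card_erase_of_mem hp]; omega
  have hsingle : {p} ∉ insert (S.erase p) (PP.erase S) := by
    simp only [Finset.mem_insert, Finset.mem_erase]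
    rintro (he | ⟨hne, hmem⟩)
    · exact Finset.notMem_erase p S (he ▸ Finset.mem_singleton_self p)
    · exact hne (h.eq_of_mem hmem hS (Finset.mem_singleton_self p) hp)
  have hrest' : S.erase p ∉ PP.erase S := fun hmem =>
    have ⟨x, hx⟩ := hrest
    (Finset.mem_erase.1 hmem).1
      (h.eq_of_mem (Finset.mem_erase.1 hmem).2 hS hx (Finset.mem_of_mem_erase hx))
  rw [splitOff, Finset.card_insert_of_notMem hsingle, Finset.card_insert_of_notMem hrest',
    Finset.card_erase_of_mem hS, Nat.sub_add_cancel (Finset.card_pos.2 ⟨S, hS⟩)]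

theorem isNoncrossingPartition_splitOff (h : IsNoncrossingPartition PP) (hS : S ∈ PP)
    (hp : p ∈ S) (hS₂ : 2 ≤ S.card) : IsNoncrossingPartition (splitOff PP S p) := by
  have hsub : S.erase p ⊆ S := Finset.erase_subset p S
  have hout (T : Finset (Fin m)) (hT : T ∈ PP) (hTS : T ≠ S) : p ∉ T := fun hpT =>
    hTS (h.eq_of_mem hT hS hpT hp)
  refine ⟨fun T hT => ?_, fun A hA B hB hAB => ?_, fun x => ?_⟩
  · rcases mem_splitOff.1 hT with rfl | rfl | ⟨hT, -⟩
    · exact Finset.singleton_nonempty p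
    · rw [← Finset.card_pos, Finset.card_erase_of_mem hp]; omega
    · exact h.nonempty T hT
  · have hold (T : Finset (Fin m)) (hT : T ∈ PP) (hTS : T ≠ S) :=
      h.disjoint_not_crosses S hS T hT hTS.symm
    have hold' (T : Finset (Fin m)) (hT : T ∈ PP) (hTS : T ≠ S) :=
      h.disjoint_not_crosses T hT S hS hTS
    rcases mem_splitOff.1 hA with rfl | rfl | ⟨hA, hAS⟩ <;>
      rcases mem_splitOff.1 hB with rfl | rfl | ⟨hB, hBS⟩
    · exact absurd rfl hAB
    · exact ⟨Finset.disjoint_singleton_left.2 (Finset.notMem_erase p S),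
        not_crosses_singleton_left p _⟩
    · exact ⟨Finset.disjoint_singleton_left.2 (hout B hB hBS), not_crosses_singleton_left p B⟩
    · exact ⟨Finset.disjoint_singleton_right.2 (Finset.notMem_erase p S),
        not_crosses_singleton_right _ p⟩
    · exact absurd rfl hAB
    · exact ⟨(hold B hB hBS).1.mono_left hsub,
        fun hc => (hold B hB hBS).2 (crosses_mono hsub subset_rfl hc)⟩
    · exact ⟨Finset.disjoint_singleton_right.2 (hout A hA hAS),
        not_crosses_singleton_right A p⟩
    · exact ⟨(hold' A hA hAS).1.mono_right hsub,
        fun hc => (hold' A hA hAS).2 (crosses_mono subset_rfl hsub hc)⟩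
    · exact h.disjoint_not_crosses A hA B hB hAB
  · obtain ⟨T, hT, hxT⟩ := h.exists_mem x
    by_cases hTS : T = S
    · subst hTS
      by_cases hxp : x = p
      · exact ⟨{p}, mem_splitOff.2 (.inl rfl), hxp ▸ Finset.mem_singleton_self x⟩
      · exact ⟨T.erase p, mem_splitOff.2 (.inr (.inl rfl)), Finset.mem_erase.2 ⟨hxp, hxT⟩⟩
    · exact ⟨T, mem_splitOff.2 (.inr (.inr ⟨hT, hTS⟩)), hxT⟩

end NoncrossingPartition

section RegionCount

variable {m : ℕ} [NeZero m] {PP : Finset (Finset (Fin m))} {S : Finset (Fin m)} {p : Fin m}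

theorem sameRegion_of_refines {PP' : Finset (Finset (Fin m))}
    (hrefine : ∀ T ∈ PP', ∃ S ∈ PP, T ⊆ S) {k l : Fin m} (h : SameRegion PP k l) :
    SameRegion PP' k l :=
  h.imp_right fun h T hT hsep =>
    have ⟨S, hS, hTS⟩ := hrefine T hT
    h S hS (ArcSep.mono hTS hsep)

theorem not_sameRegion_sub_one_self (hS : S ∈ PP) (hp : p ∈ S) {q : Fin m} (hq : q ∈ S)
    (hqp : q ≠ p) : ¬ SameRegion PP (p - 1) p := by
  have hne : p - 1 ≠ p := by
    intro e
    have := congrArg Fin.val e; have := val_sub_one_cases p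
    exact hqp (Fin.ext (by omega))
  exact not_or.2 ⟨hne, fun h => h S hS (arcSep_of_inArc hne hp hq
    (inArc_sub_one_self_iff.2 rfl) (mt inArc_sub_one_self_iff.1 hqp))⟩

theorem sameRegion_sub_one_self (h : IsNoncrossingPartition PP) (hp : {p} ∈ PP) :
    SameRegion PP (p - 1) p := by
  by_cases hne : p - 1 = p
  · exact .inl hne
  refine .inr fun T hT hsep => ?_
  obtain ⟨⟨t, htT, ht⟩, ⟨t', ht'T, ht'⟩⟩ := (arcSep_iff_of_ne hne).1 hsep
  rw [inArc_sub_one_self_iff] at ht ht'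
  subst ht
  rw [h.eq_of_mem hT hp htT (Finset.mem_singleton_self t)] at ht'T
  exact ht' (Finset.mem_singleton.1 ht'T)

/- In the next two lemmas `p` is the only vertex of `S` on the arc `k + 1, …, l`, and no other
block separates the unit arcs `k` and `l`. A block separating `k` from `p - 1`, or `p` from `l`,
would then interleave with `p` and a vertex `q` of `S` on the opposite arc. -/

theorem sameRegion_sub_one_of_isolated (h : IsNoncrossingPartition PP) (hS : S ∈ PP)
    (hp : p ∈ S) {q k l : Fin m} (hq : q ∈ S) (hkl : k ≠ l)
    (hothers : ∀ T ∈ PP, T ≠ S → ¬ ArcSep T k l)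
    (honly : ∀ x ∈ S, InArc k l x → x = p)
    (hpkl : InArc k l p) (hqkl : ¬ InArc k l q) : SameRegion PP k (p - 1) := by
  by_cases hk : k = p - 1
  · exact .inl hk
  have hpk : p ≠ k + 1 := fun e => hk (by rw [e, add_sub_cancel_right])
  have hfp : arcPos (k + 1) (p - 1) = arcPos (k + 1) p - 1 := arcPos_sub_one hpk
  have hfp₀ : arcPos (k + 1) p ≠ 0 := mt arcPos_eq_zero_iff.1 hpk
  have hpk' : arcPos (k + 1) (p - 1) < arcPos (k + 1) k := by
    rw [arcPos_add_one_self]; have := arcPos_lt (k + 1) p; omega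
  refine .inr fun T hT ⟨⟨t, htT, ht⟩, ⟨t', ht'T, ht'⟩⟩ => ?_
  replace ht' := (inArc_iff_of_lt hpk' t').1 ht'
  unfold InArc at hpkl hqkl
  have htl : InArc k l t := by unfold InArc; omega
  by_cases hTS : T = S
  · subst hTS
    have := honly t htT htl
    subst this
    omega
  have ht'l := inArc_of_not_arcSep hkl (hothers T hT hTS) htT ht'T htl
  have ht'p : arcPos (k + 1) t' ≠ arcPos (k + 1) p := fun e =>
    hTS (h.eq_of_mem hT hS ht'T (arcPos_injective _ e ▸ hp))
  unfold InArc at ht'l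
  exact (h.disjoint_not_crosses T hT S hS hTS).2
    (crosses_of_arcPos_lt (o := k + 1) htT hp ht'T hq (by omega) (by omega) (by omega))

theorem sameRegion_of_isolated (h : IsNoncrossingPartition PP) (hS : S ∈ PP)
    (hp : p ∈ S) {q k l : Fin m} (hq : q ∈ S) (hkl : k ≠ l)
    (hothers : ∀ T ∈ PP, T ≠ S → ¬ ArcSep T k l)
    (honly : ∀ x ∈ S, InArc k l x → x = p)
    (hpkl : InArc k l p) (hqkl : ¬ InArc k l q) : SameRegion PP p l := by
  by_cases hpl : p = l
  · exact .inl hpl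
  have hfpl : arcPos (k + 1) p < arcPos (k + 1) l :=
    lt_of_le_of_ne hpkl fun e => hpl (arcPos_injective _ e)
  refine .inr fun T hT hsep => ?_
  obtain ⟨⟨t, htT, ht⟩, ⟨t', ht'T, ht'⟩⟩ := (arcSep_iff_of_ne hpl).1 hsep
  rw [inArc_iff_of_lt hfpl] at ht ht'
  have htl : InArc k l t := ht.2
  by_cases hTS : T = S
  · subst hTS
    have := honly t htT htl
    subst this
    omega
  have ht'l := inArc_of_not_arcSep hkl (hothers T hT hTS) htT ht'T htl
  have ht'p : arcPos (k + 1) t' ≠ arcPos (k + 1) p := fun e =>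
    hTS (h.eq_of_mem hT hS ht'T (arcPos_injective _ e ▸ hp))
  unfold InArc at ht'l hqkl
  exact (h.disjoint_not_crosses T hT S hS hTS).2
    (crosses_of_arcPos_lt (o := k + 1) ht'T hp htT hq (by omega) (by omega) (by omega))

theorem sameRegion_of_sameRegion_splitOff (h : IsNoncrossingPartition PP) (hS : S ∈ PP)
    (hp : p ∈ S) {k l : Fin m} (h' : SameRegion (splitOff PP S p) k l) :
    SameRegion PP k l ∨ (SameRegion PP k (p - 1) ∧ SameRegion PP p l) ∨
      (SameRegion PP k p ∧ SameRegion PP (p - 1) l) := by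
  by_cases hR : SameRegion PP k l
  · exact .inl hR
  have hkl : k ≠ l := fun e => hR (.inl e)
  replace h' := h'.resolve_left hkl
  have hothers (T : Finset (Fin m)) (hT : T ∈ PP) (hTS : T ≠ S) : ¬ ArcSep T k l :=
    h' T (mem_splitOff.2 (.inr (.inr ⟨hT, hTS⟩)))
  have hsepS : ArcSep S k l := by
    by_contra hno
    exact hR (.inr fun T hT => if hTS : T = S then hTS ▸ hno else hothers T hT hTS)
  have hrest : ¬ ArcSep (S.erase p) k l := h' _ (mem_splitOff.2 (.inr (.inl rfl)))
  obtain ⟨⟨x, hxS, hx⟩, ⟨y, hyS, hy⟩⟩ := (arcSep_iff_of_ne hkl).1 hsepS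
  by_cases honly : ∀ z ∈ S, InArc k l z → z = p
  · obtain rfl := honly x hxS hx
    exact .inr (.inl ⟨sameRegion_sub_one_of_isolated h hS hxS hyS hkl hothers honly hx hy,
      sameRegion_of_isolated h hS hxS hyS hkl hothers honly hx hy⟩)
  obtain ⟨w, hwS, hw, hwp⟩ : ∃ w ∈ S, InArc k l w ∧ w ≠ p := by simpa using honly
  rw [← inArc_swap_iff hkl] at hy
  have honly' (z : Fin m) (hz : z ∈ S) (hzlk : InArc l k z) : z = p := by
    by_contra hzp
    exact hrest
      ⟨⟨w, Finset.mem_erase.2 ⟨hwp, hwS⟩, hw⟩, ⟨z, Finset.mem_erase.2 ⟨hzp, hz⟩, hzlk⟩⟩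
  obtain rfl := honly' y hyS hy
  have hothers' (T : Finset (Fin m)) (hT : T ∈ PP) (hTS : T ≠ S) : ¬ ArcSep T l k :=
    fun hsep => hothers T hT hTS hsep.symm
  have hxlk : ¬ InArc l k x := (inArc_swap_iff hkl x).not.2 (not_not.2 hx)
  exact .inr (.inr
    ⟨sameRegion_symm (sameRegion_of_isolated h hS hyS hxS hkl.symm hothers' honly' hy hxlk),
      sameRegion_symm
        (sameRegion_sub_one_of_isolated h hS hyS hxS hkl.symm hothers' honly' hy hxlk)⟩)

theorem numRoundGaps_splitOff (h : IsNoncrossingPartition PP) (hS : S ∈ PP) (hp : p ∈ S)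
    (hS₂ : 2 ≤ S.card) : numRoundGaps PP = numRoundGaps (splitOff PP S p) + 1 := by
  obtain ⟨q, hq, hqp⟩ := Finset.exists_mem_ne hS₂ p
  have hrefine (T : Finset (Fin m)) (hT : T ∈ splitOff PP S p) : ∃ S' ∈ PP, T ⊆ S' := by
    rcases mem_splitOff.1 hT with rfl | rfl | ⟨hT, -⟩
    · exact ⟨S, hS, Finset.singleton_subset_iff.2 hp⟩
    · exact ⟨S, hS, Finset.erase_subset p S⟩
    · exact ⟨T, hT, subset_rfl⟩
  have hmerged : SameRegion (splitOff PP S p) (p - 1) p :=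
    sameRegion_sub_one_self (isNoncrossingPartition_splitOff h hS hp hS₂)
      (mem_splitOff.2 (.inl rfl))
  rw [numRoundGaps_eq_card_quotient, numRoundGaps_eq_card_quotient]
  refine Setoid.card_quotient_eq_add_one_of_merge (not_sameRegion_sub_one_self hS hp hq hqp)
    fun x y => ⟨sameRegion_of_sameRegion_splitOff h hS hp, ?_⟩
  have hmono {x y : Fin m} : SameRegion PP x y → SameRegion (splitOff PP S p) x y :=
    sameRegion_of_refines hrefine
  rintro (hxy | ⟨hx, hy⟩ | ⟨hx, hy⟩)
  · exact hmono hxy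
  · exact sameRegion_trans (hmono hx) (sameRegion_trans hmerged (hmono hy))
  · exact sameRegion_trans (hmono hx)
      (sameRegion_trans (sameRegion_symm hmerged) (hmono hy))

theorem numRoundGaps_eq_one (hPP : ∀ S ∈ PP, S.card = 1) : numRoundGaps PP = 1 := by
  have hall (k l : Fin m) : SameRegion PP k l := by
    by_cases hkl : k = l
    · exact .inl hkl
    refine .inr fun S hS => ?_
    obtain ⟨c, rfl⟩ := Finset.card_eq_one.1 (hPP S hS)
    exact not_arcSep_singleton hkl c
  rw [numRoundGaps_eq_card_quotient, Nat.card_eq_one_iff_unique]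
  exact ⟨⟨fun u v => Quotient.inductionOn₂ u v fun k l => Quotient.sound (hall k l)⟩,
    ⟨⟦0⟧⟩⟩

theorem IsNoncrossingPartition.numRoundGaps_add_card (h : IsNoncrossingPartition PP) :
    numRoundGaps PP + PP.card = m + 1 := by
  induction hN : m - PP.card generalizing PP with
  | zero =>
    have hcard : PP.card ≤ m := h.card_le_sum_card.trans_eq h.sum_card
    have hsum : ∑ _S ∈ PP, 1 = ∑ S ∈ PP, S.card := by
      rw [← Finset.card_eq_sum_ones, h.sum_card]; omega
    have hsingle : ∀ S ∈ PP, S.card = 1 := fun S hS =>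
      ((Finset.sum_eq_sum_iff_of_le fun T hT => (h.nonempty T hT).card_pos).1 hsum S hS).symm
    rw [numRoundGaps_eq_one hsingle]
    omega
  | succ N ih =>
    obtain ⟨S, hS, hS₂⟩ : ∃ S ∈ PP, 1 < S.card :=
      Finset.exists_lt_of_sum_lt (by rw [← Finset.card_eq_sum_ones, h.sum_card]; omega)
    obtain ⟨p, hp⟩ := h.nonempty S hS
    have h' := isNoncrossingPartition_splitOff h hS hp hS₂
    have hcard' := card_splitOff h hS hp hS₂
    have := ih h' (by omega)
    rw [numRoundGaps_splitOff h hS hp hS₂]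
    omega

end RegionCount

/-- The gaps are the polygons `S ∈ PP`, of degree `S.card / n`, and the round gaps, of degree the
number of unit arcs they contain; so the round gaps contribute `D*n − numRoundGaps PP` to the sum
of `(degree − 1)`. -/
theorem degree_sum_formula_general (D n : ℕ) [NeZero (D * n)]
    (PP : Finset (Finset (Fin (D * n)))) (hPP : IsPortrait D n PP) :
    (∑ S ∈ PP, (S.card / n - 1)) + (D * n - numRoundGaps PP) = D - 1 := by
  obtain ⟨hpoly, hpair, hcover⟩ := hPP
  have h : IsNoncrossingPartition PP :=
    ⟨fun S hS => Finset.card_pos.1 (by have := (hpoly S hS).1; omega), hpair, hcover⟩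
  have hn : 0 < n := Nat.pos_of_ne_zero (right_ne_zero_of_mul (NeZero.ne (D * n)))
  have hdeg : ∑ S ∈ PP, S.card / n = D := by
    rw [← Nat.sum_div fun S hS => (hpoly S hS).2.1, h.sum_card, Nat.mul_div_cancel D hn]
  have hdeg_pos (S) (hS : S ∈ PP) : 1 ≤ S.card / n :=
    Nat.div_pos (Nat.le_of_dvd (by have := (hpoly S hS).1; omega) (hpoly S hS).2.1) hn
  have hsum : ∑ S ∈ PP, (S.card / n - 1) + PP.card = D := by
    rw [Finset.card_eq_sum_ones, ← Finset.sum_add_distrib]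
    exact (Finset.sum_congr rfl fun S hS => Nat.sub_add_cancel (hdeg_pos S hS)).trans hdeg
  have hPP_pos : 0 < PP.card := by
    obtain ⟨S, hS, -⟩ := hcover ⟨0, Nat.pos_of_ne_zero (NeZero.ne _)⟩
    exact Finset.card_pos.2 ⟨S, hS⟩
  have := h.numRoundGaps_add_card
  omega

/-- combinatorial Riemann–Hurwitz: Let `PP` be a sibling portrait of
an `n`-gon inserted in a round gap of degree `D` (modeled on the `D*n` preimage
points; the case `D = d` is the full disk).  The resulting gaps are the polygons
`S ∈ PP`, of degree `S.card / n`, and the round gaps, whose degree is the number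
of unit arcs they contain, so that the sum of `(degree − 1)` over all round gaps
is `D*n − numRoundGaps PP`.  Then the degrees `d_i` of all the gaps satisfy
`Σ_i (d_i − 1) = D − 1`. -/
theorem degree_sum_formula (D n : ℕ) (hD : 1 ≤ D) (hn : 2 ≤ n) [NeZero (D * n)]
    (PP : Finset (Finset (Fin (D * n)))) (hPP : IsPortrait D n PP) :
    (∑ S ∈ PP, (S.card / n - 1)) + (D * n - numRoundGaps PP) = D - 1 :=
  degree_sum_formula_general D n PP hPP
end
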